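/- arXiv:2505.13303 — 7 statements merged into one kernel-verified Lean document; each statement's English description precedes it below -/
import Mathlib

section
/- Let F be a field, n a positive integer, and A ∈ M_n(F) a matrix with trace zero. Then A lies in the additive subgroup [M_n(F), M_n(F)] generated by additive commutators. -/
/-!
Off-diagonal matrix units are commutators, `E_ij c = [E_ii 1, E_ij c]`, and so are differences of
diagonal ones, `E_ii c - E_jj c = [E_ij c, E_ji 1]`. Hence, for a fixed index `i₀`, the additive map
`A ↦ A - E_{i₀i₀} (tr A)` takes every matrix unit into the commutator subgroup, and therefore every
matrix; for a traceless `A` it is the identity.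
-/

/-- The additive subgroup generated by all additive commutators of a ring. -/
def commutatorAddSubgroup (R : Type*) [Ring R] : AddSubgroup R :=
  AddSubgroup.closure {x | ∃ a b : R, x = a * b - b * a}

theorem mul_sub_mul_mem_commutatorAddSubgroup {R : Type*} [Ring R] (a b : R) :
    a * b - b * a ∈ commutatorAddSubgroup R :=
  AddSubgroup.subset_closure ⟨a, b, rfl⟩

namespace Matrix

variable {ι R : Type*} [Fintype ι] [DecidableEq ι] [Ring R]

theorem single_mem_commutatorAddSubgroup_of_ne {i j : ι} (h : i ≠ j) (c : R) :
    single i j c ∈ commutatorAddSubgroup (Matrix ι ι R) := by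
  have hcomm : single i i (1 : R) * single i j c - single i j c * single i i 1 = single i j c := by
    rw [single_mul_single_same, single_mul_single_of_ne c i j i h.symm, one_mul, sub_zero]
  exact hcomm ▸ mul_sub_mul_mem_commutatorAddSubgroup _ _

theorem single_sub_single_mem_commutatorAddSubgroup (i j : ι) (c : R) :
    single i i c - single j j c ∈ commutatorAddSubgroup (Matrix ι ι R) := by
  have hcomm : single i j c * single j i (1 : R) - single j i 1 * single i j c =
      single i i c - single j j c := by
    rw [single_mul_single_same, single_mul_single_same, mul_one, one_mul]
  exact hcomm ▸ mul_sub_mul_mem_commutatorAddSubgroup _ _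

theorem sub_single_trace_mem_commutatorAddSubgroup (i₀ : ι) (A : Matrix ι ι R) :
    A - single i₀ i₀ A.trace ∈ commutatorAddSubgroup (Matrix ι ι R) := by
  induction A using Matrix.induction_on' with
  | h_zero => simp
  | h_add A B hA hB =>
    rw [trace_add, single_add, add_sub_add_comm]
    exact add_mem hA hB
  | h_std_basis i j c =>
    obtain rfl | hij := eq_or_ne i j
    · rw [trace_single_eq_same]
      exact single_sub_single_mem_commutatorAddSubgroup i i₀ c
    · rw [trace_single_eq_of_ne _ _ _ hij, single_zero, sub_zero]
      exact single_mem_commutatorAddSubgroup_of_ne hij c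

theorem mem_commutatorAddSubgroup_of_trace_eq_zero {A : Matrix ι ι R} (hA : A.trace = 0) :
    A ∈ commutatorAddSubgroup (Matrix ι ι R) := by
  cases isEmpty_or_nonempty ι with
  | inl _ => exact Subsingleton.elim A 0 ▸ zero_mem _
  | inr hι =>
    obtain ⟨i₀⟩ := hι
    simpa [hA] using sub_single_trace_mem_commutatorAddSubgroup i₀ A

end Matrix

theorem stmt_2_general (F : Type*) [Field F] (n : ℕ)
    (A : Matrix (Fin n) (Fin n) F) (hA : Matrix.trace A = 0) :
    A ∈ commutatorAddSubgroup (Matrix (Fin n) (Fin n) F) :=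
  Matrix.mem_commutatorAddSubgroup_of_trace_eq_zero hA

theorem stmt_2 (F : Type*) [Field F] (n : ℕ) (hn : 0 < n)
    (A : Matrix (Fin n) (Fin n) F) (hA : Matrix.trace A = 0) :
    A ∈ commutatorAddSubgroup (Matrix (Fin n) (Fin n) F) :=
  stmt_2_general F n A hA
end

section
/- Let A be a unital associative algebra such that every finitely generated subalgebra is contained in a subalgebra B with B = Z(B) + [B, B]. If every additive commutator of A is central in A, then A is commutative. -/
/-! Write `x ∈ B` as `z + c` with `z ∈ Z(B)` and `c ∈ [B, B]`. Then `z` commutes with every element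
of `B`, and `c`, a sum of commutators of `A`, is central in `A`; so `x` commutes with all of `B`. Any
two elements of `A` lie in such a `B`. -/

section

variable {R S : Type*} [Ring R] [Ring S]

theorem map_mem_center_of_mem_commutatorAddSubgroup (f : R →+* S)
    (hf : ∀ a b : R, f a * f b - f b * f a ∈ Set.center S) {c : R}
    (hc : c ∈ commutatorAddSubgroup R) : f c ∈ Set.center S := by
  suffices commutatorAddSubgroup R ≤ (Subring.center S).toAddSubgroup.comap f.toAddMonoidHom from
    this hc
  refine (AddSubgroup.closure_le _).mpr ?_
  rintro _ ⟨a, b, rfl⟩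
  show f (a * b - b * a) ∈ Subring.center S
  rw [map_sub, map_mul, map_mul]
  exact hf a b

theorem commute_map_add_of_mem_center_of_mem_commutatorAddSubgroup (f : R →+* S)
    (hf : ∀ a b : R, f a * f b - f b * f a ∈ Set.center S) {z c : R} (hz : z ∈ Set.center R)
    (hc : c ∈ commutatorAddSubgroup R) (y : R) : Commute (f (z + c)) (f y) := by
  rw [map_add]
  refine Commute.add_left ?_ ?_
  · exact ((Set.mem_center_iff.mp hz).comm y).map f
  · exact (Set.mem_center_iff.mp (map_mem_center_of_mem_commutatorAddSubgroup f hf hc)).comm _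

end

theorem stmt_8 (F : Type*) [Field F] (A : Type*) [Ring A] [Algebra F A]
    (hloc : ∀ s : Finset A, ∃ B : Subalgebra F A, Algebra.adjoin F (s : Set A) ≤ B ∧
      ∀ x : B, ∃ z ∈ Set.center B, ∃ c ∈ commutatorAddSubgroup B, x = z + c)
    (hcomm : ∀ x y : A, x * y - y * x ∈ Set.center A) :
    ∀ x y : A, x * y = y * x := by
  classical
  intro x y
  obtain ⟨B, hsB, hdecomp⟩ := hloc {x, y}
  have hx : x ∈ B := hsB (Algebra.subset_adjoin (by simp))
  have hy : y ∈ B := hsB (Algebra.subset_adjoin (by simp))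
  obtain ⟨z, hz, c, hc, hxzc⟩ := hdecomp ⟨x, hx⟩
  have hxy := commute_map_add_of_mem_center_of_mem_commutatorAddSubgroup B.val.toRingHom
    (fun a b => hcomm a b) hz hc ⟨y, hy⟩
  rwa [← hxzc] at hxy
end

section
/- Let F be a field of characteristic zero and G a locally finite group. If all additive commutators of a twisted group algebra F^τ G are central, then F^τ G is commutative. -/
theorem pow_succ_mul_sub_mul_pow_succ_of_commute {R : Type*} [Ring R] {u v : R}
    (h : Commute u (u * v - v * u)) (n : ℕ) :
    u ^ (n + 1) * v - v * u ^ (n + 1) = (n + 1) • (u ^ n * (u * v - v * u)) := by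
  induction n with
  | zero => simp
  | succ n ih =>
    calc u ^ (n + 2) * v - v * u ^ (n + 2)
        = u * (u ^ (n + 1) * v - v * u ^ (n + 1)) + (u * v - v * u) * u ^ (n + 1) := by
          simp only [pow_succ' u (n + 1), mul_sub, sub_mul, mul_assoc]; abel
      _ = (n + 2) • (u ^ (n + 1) * (u * v - v * u)) := by
          rw [ih, mul_smul_comm, ← mul_assoc, ← pow_succ', ← (h.pow_left (n + 1)).eq,
            ← succ_nsmul]

theorem Commute.of_commute_pow {R : Type*} [Ring R] [IsAddTorsionFree R] {u v : R} {n : ℕ}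
    (hn : n ≠ 0) (hu : IsUnit (u ^ n)) (huv : Commute u (u * v - v * u))
    (hpow : Commute (u ^ n) v) : Commute u v := by
  obtain ⟨m, rfl⟩ := Nat.exists_eq_succ_of_ne_zero hn
  have hm : u ^ m * (u * v - v * u) = 0 := by
    have := pow_succ_mul_sub_mul_pow_succ_of_commute huv m
    rwa [hpow.eq, sub_self, eq_comm, smul_eq_zero_iff_right m.succ_ne_zero] at this
  have : u ^ (m + 1) * (u * v - v * u) = 0 := by
    rw [pow_succ', mul_assoc, hm, mul_zero]
  exact sub_eq_zero.mp (hu.mul_right_eq_zero.mp this)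

namespace Module.Basis

theorem commute_of_forall_commute {R A ι : Type*} [CommSemiring R] [Semiring A] [Algebra R A]
    (b : Basis ι R A) {y : A} (h : ∀ i, Commute (b i) y) (x : A) : Commute x y := by
  have : LinearMap.mulRight R y = LinearMap.mulLeft R y := b.ext fun i => (h i).eq
  exact congr($this x)

section TwistedGroupAlgebra

variable {F A G : Type*} [Field F] [Ring A] [Algebra F A] [Group G]
  (b : Basis G F A) {τ : G → G → F} (hτ : ∀ x y, τ x y ≠ 0)
  (hmul : ∀ x y : G, b x * b y = τ x y • b (x * y))
include hτ hmul

theorem twist_one_left (g : G) : τ 1 g = τ 1 1 := by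
  have h := mul_assoc (b 1) (b 1) (b g)
  simp only [hmul, one_mul, smul_mul_assoc, mul_smul_comm, smul_smul] at h
  exact mul_right_cancel₀ (hτ 1 g) (smul_left_injective F (b.ne_zero g) h).symm

theorem apply_one_eq_smul_one : b 1 = τ 1 1 • 1 := by
  set e : A := (τ 1 1)⁻¹ • b 1
  have he : LinearMap.mulLeft F e = LinearMap.id := b.ext fun g => by
    simp [e, hmul, smul_smul, b.twist_one_left hτ hmul g, hτ]
  have : e = 1 := by simpa using congr($he 1)
  rw [← this, smul_smul, mul_inv_cancel₀ (hτ 1 1), one_smul]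

theorem exists_pow_succ_eq_smul (g : G) (n : ℕ) :
    ∃ μ : F, μ ≠ 0 ∧ b g ^ (n + 1) = μ • b (g ^ (n + 1)) := by
  induction n with
  | zero => exact ⟨1, one_ne_zero, by simp⟩
  | succ n ih =>
    obtain ⟨μ, hμ, hpow⟩ := ih
    refine ⟨μ * τ (g ^ (n + 1)) g, mul_ne_zero hμ (hτ _ _), ?_⟩
    rw [pow_succ, hpow, smul_mul_assoc, hmul, smul_smul, ← pow_succ]

theorem exists_pow_eq_algebraMap_of_pow_eq_one {g : G} {n : ℕ} (hg : g ^ (n + 1) = 1) :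
    ∃ c : F, c ≠ 0 ∧ b g ^ (n + 1) = algebraMap F A c := by
  obtain ⟨μ, hμ, hpow⟩ := b.exists_pow_succ_eq_smul hτ hmul g n
  refine ⟨μ * τ 1 1, mul_ne_zero hμ (hτ 1 1), ?_⟩
  rw [hpow, hg, b.apply_one_eq_smul_one hτ hmul, smul_smul, Algebra.algebraMap_eq_smul_one]

end TwistedGroupAlgebra

end Module.Basis

/-- A twisted group algebra `F^τ G`: an `F`-algebra with a basis indexed by `G`
such that the product of two basis elements is a nonzero scalar multiple of the
basis element of the product. -/
theorem stmt_9 (F : Type*) [Field F] [CharZero F] (G : Type*) [Group G]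
    (hG : ∀ S : Finset G, Set.Finite ((Subgroup.closure (S : Set G) : Subgroup G) : Set G))
    (A : Type*) [Ring A] [Algebra F A]
    (b : Module.Basis G F A) (τ : G → G → F) (hτ : ∀ x y, τ x y ≠ 0)
    (hmul : ∀ x y : G, b x * b y = τ x y • b (x * y))
    (hcomm : ∀ x y : A, x * y - y * x ∈ Set.center A) :
    ∀ x y : A, x * y = y * x := by
  have : IsAddTorsionFree A := .of_isTorsionFree F A
  have hcentral (g : G) (y : A) : Commute (b g) y := by
    have hg : IsOfFinOrder g :=
      finite_zpowers.mp (by simpa [Subgroup.zpowers_eq_closure] using hG {g})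
    obtain ⟨n, hn⟩ := Nat.exists_eq_succ_of_ne_zero hg.orderOf_pos.ne'
    obtain ⟨c, hc, hpow⟩ :=
      b.exists_pow_eq_algebraMap_of_pow_eq_one hτ hmul (hn ▸ pow_orderOf_eq_one g)
    refine .of_commute_pow n.succ_ne_zero ?_ ((hcomm _ _).comm _).symm ?_
    · exact hpow ▸ hc.isUnit.map (algebraMap F A)
    · exact hpow ▸ Algebra.commutes c y
  exact fun x y => b.commute_of_forall_commute (hcentral · y) x
end

section
/- Let D be a ring with no nonzero nilpotent elements. If every additive commutator xy − yx lies in the center of D, then D is commutative. -/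
theorem stmt_10 (D : Type*) [Ring D] (hred : ∀ x : D, IsNilpotent x → x = 0)
    (hcomm : ∀ x y : D, x * y - y * x ∈ Set.center D) :
    ∀ x y : D, x * y = y * x := by
  intro x y
  set c := x * y - y * x with hc_def
  have hc : ∀ d : D, c * d = d * c := fun d =>
    (Set.mem_center_iff.mp (hcomm x y)).comm d
  have hxc : ∀ d : D, (x * c) * d = d * (x * c) := by
    have h := hcomm x (x * y)
    have heq : x * (x * y) - (x * y) * x = x * c := by
      rw [hc_def]; noncomm_ring
    rw [heq] at h
    exact fun d => (Set.mem_center_iff.mp h).comm d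
  have h2 : c * (x * y) = (x * c) * y := by
    rw [← mul_assoc, hc x]
  have h3 : c * (y * x) = y * (x * c) := by
    rw [← mul_assoc, hc y, mul_assoc, hc x]
  have hcc : c * c = 0 := by
    have h1 : c * c = c * (x * y) - c * (y * x) := by
      rw [hc_def]; noncomm_ring
    rw [h1, h2, h3, hxc y, sub_self]
  have : c = 0 := hred c ⟨2, by rw [pow_two]; exact hcc⟩
  rw [hc_def] at this
  exact sub_eq_zero.mp this
end

section
/- Let D be a division algebra finite-dimensional over its center F with n = √(dim_F D), and let K be a subfield of D containing F. Then dim_F K ≤ n, with equality if and only if K is a maximal subfield of D. -/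
/-!
Let `m = [K : F]` and `q = [D : K]`, so that `m q = n²`. The ring `R = K ⊗_F Dᵒᵖ` acts on `D` by
`(k ⊗ d) • x = k x d`, and this action is `K`-linear, giving an `F`-linear map `R → End_K(D)`
between spaces of dimensions `m n²` and `q n²`.

* Since `F` is the centre of `D`, the map `D ⊗_F Dᵒᵖ → End_F(D)` is injective, hence so is
  `R → End_K(D)`; thus `m ≤ q`, i.e. `m ≤ n`.
* If `K` is a maximal subfield, it is its own centralizer. The `R`-module `D` is simple with
  `End_R(D) = K`, so by the Jacobson density theorem `R → End_K(D)` is surjective; thus `q ≤ m`,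
  i.e. `n ≤ m`. Conversely, a subfield of dimension `n` is maximal by the upper bound.
-/

open scoped TensorProduct

section CentralDivisionAlgebra

variable {F D : Type*} [Field F] [DivisionRing D] [Algebra F D] [Algebra.IsCentral F D]

theorem Algebra.IsCentral.eq_zero_of_forall_sum_mul_mul_eq_zero {ι : Type*} [DecidableEq ι]
    {b : ι → D} (hb : LinearIndependent F b) (s : Finset ι) (d : ι → D)
    (h : ∀ x, ∑ i ∈ s, d i * x * b i = 0) : ∀ i ∈ s, d i = 0 := by
  induction s using Finset.strongInduction generalizing d with
  | H s ih =>
    by_contra! ⟨i₀, hi₀, hd₀⟩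
    set e : ι → D := fun i => (d i₀)⁻¹ * d i
    have he₀ : e i₀ = 1 := inv_mul_cancel₀ hd₀
    have he : ∀ x, ∑ i ∈ s, e i * x * b i = 0 := fun x => by
      simpa [e, Finset.mul_sum, mul_assoc] using congrArg ((d i₀)⁻¹ * ·) (h x)
    -- The commutators `e i * c - c * e i` satisfy the same relation, with vanishing `i₀`-th term.
    have he_central : ∀ i ∈ s, e i ∈ Subalgebra.center F D := by
      intro i hi
      refine Subalgebra.mem_center_iff.mpr fun c => ?_
      have hrel : ∀ x, ∑ j ∈ s.erase i₀, (e j * c - c * e j) * x * b j = 0 := fun x => by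
        rw [Finset.sum_erase _ (by simp [he₀])]
        calc ∑ j ∈ s, (e j * c - c * e j) * x * b j
            = ∑ j ∈ s, e j * (c * x) * b j - c * ∑ j ∈ s, e j * x * b j := by
              simp only [sub_mul, Finset.sum_sub_distrib, Finset.mul_sum, mul_assoc]
          _ = 0 := by rw [he, he, mul_zero, sub_zero]
      rcases eq_or_ne i i₀ with rfl | hne
      · rw [he₀, one_mul, mul_one]
      · exact (sub_eq_zero.mp (ih _ (Finset.erase_ssubset hi₀) _ hrel i
          (Finset.mem_erase.mpr ⟨hne, hi⟩))).symm
    choose! f hf using fun i hi => (Algebra.IsCentral.mem_center_iff F).mp (he_central i hi)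
    have hf₀ : f i₀ = 0 := by
      refine linearIndependent_iff'.mp hb s f ?_ i₀ hi₀
      rw [← he 1]
      exact Finset.sum_congr rfl fun i hi => by rw [Algebra.smul_def, ← hf i hi, mul_one]
    exact one_ne_zero (by rw [← he₀, hf i₀ hi₀, hf₀, map_zero] : (1 : D) = 0)

theorem Algebra.IsCentral.mulLeftRight_injective :
    Function.Injective (AlgHom.mulLeftRight F D) := by
  classical
  let b := Module.Free.chooseBasis F D
  let bop := b.map (MulOpposite.opLinearEquiv F)
  refine (injective_iff_map_eq_zero _).mpr fun t ht => ?_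
  obtain ⟨c, rfl⟩ := (TensorProduct.equivFinsuppOfBasisRight bop).symm.surjective t
  have hc : ∀ x, ∑ i ∈ c.support, c i * x * b i = 0 := fun x => by
    simpa [Finsupp.sum, bop, AlgHom.mulLeftRight_apply] using congr($ht x)
  have hc0 : c = 0 := Finsupp.ext fun i => by
    by_contra hi
    exact hi (eq_zero_of_forall_sum_mul_mul_eq_zero b.linearIndependent c.support c hc i
      (Finsupp.mem_support_iff.mpr hi))
  simp [hc0]

end CentralDivisionAlgebra

section Subfield

-- `K` acts on `D` by left multiplication by `k • 1`, as `(k • x) * y = k • (x * y)`.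
variable {F K D : Type*} [Field F] [Field K] [DivisionRing D] [Algebra F D]
  [Algebra F K] [Module K D] [IsScalarTower F K D] [IsScalarTower K D D]

attribute [local instance] TensorProduct.Algebra.module

theorem tensorProduct_op_smul_comm (r : K ⊗[F] Dᵐᵒᵖ) (k : K) (x : D) :
    r • k • x = k • r • x := by
  have h : ∀ y : D, k • y = algebraMap K (K ⊗[F] Dᵐᵒᵖ) k • y := fun y => by
    rw [Algebra.TensorProduct.algebraMap_apply, TensorProduct.Algebra.smul_def,
      Algebra.algebraMap_self_apply, one_smul]
  rw [h, h, ← mul_smul, ← mul_smul, Algebra.commutes]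

variable (F K D) in
def mulLeftRightLinearMap : K ⊗[F] Dᵐᵒᵖ →ₗ[F] D →ₗ[K] D where
  toFun r :=
    { toFun x := r • x
      map_add' := smul_add r
      map_smul' k x := tensorProduct_op_smul_comm r k x }
  map_add' r s := LinearMap.ext (add_smul r s)
  map_smul' f r := LinearMap.ext fun x =>
    LinearMap.congr_fun (TensorProduct.Algebra.moduleAux.map_smul f r) x

theorem mulLeftRightLinearMap_injective [Algebra.IsCentral F D] :
    Function.Injective (mulLeftRightLinearMap F K D) := by
  let ι : K →ₗ[F] D := (LinearMap.toSpanSingleton K D 1).restrictScalars F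
  have hι : Function.Injective ι := fun k k' h => smul_left_injective K one_ne_zero h
  have hrestrict : ∀ r, (mulLeftRightLinearMap F K D r).restrictScalars F =
      AlgHom.mulLeftRight F D (ι.rTensor Dᵐᵒᵖ r) := by
    intro r
    ext x
    induction r using TensorProduct.induction_on with
    | zero => simp
    | tmul k d => simp [ι, mulLeftRightLinearMap, TensorProduct.Algebra.smul_def,
        AlgHom.mulLeftRight_apply, MulOpposite.smul_eq_mul_unop, smul_mul_assoc]
    | add r s hr hs => simp_all
  intro r s h
  have := congrArg (LinearMap.restrictScalars F) h
  rw [hrestrict, hrestrict] at this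
  exact Module.Flat.rTensor_preserves_injective_linearMap ι hι
    (Algebra.IsCentral.mulLeftRight_injective this)

theorem isSimpleModule_tensorProduct_op : IsSimpleModule (K ⊗[F] Dᵐᵒᵖ) D := by
  refine isSimpleModule_iff_toSpanSingleton_surjective.mpr ⟨inferInstance, fun x hx y => ?_⟩
  refine ⟨1 ⊗ₜ MulOpposite.op (x⁻¹ * y), ?_⟩
  rw [LinearMap.toSpanSingleton_apply, TensorProduct.Algebra.smul_def, one_smul,
    MulOpposite.smul_eq_mul_unop, MulOpposite.unop_op, ← mul_assoc, mul_inv_cancel₀ hx, one_mul]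

theorem finrank_le_finrank_of_isCentral [FiniteDimensional F D] [Algebra.IsCentral F D] :
    Module.finrank F K ≤ Module.finrank K D := by
  have : Module.Finite K D := Module.Finite.right F K D
  have h := LinearMap.finrank_le_finrank_of_injective
    (mulLeftRightLinearMap_injective (F := F) (K := K) (D := D))
  rw [Module.finrank_tensorProduct, ← (MulOpposite.opLinearEquiv F).finrank_eq,
    Module.finrank_linearMap] at h
  exact Nat.le_of_mul_le_mul_right h Module.finrank_pos

section SelfCentralizing

variable (hC : ∀ y : D, (∀ k : K, Commute (k • (1 : D)) y) →
  ∃ k : K, k • (1 : D) = y)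
include hC

theorem exists_eq_smul_of_linearMap (φ : D →ₗ[K ⊗[F] Dᵐᵒᵖ] D) : ∃ k : K, ∀ x, φ x = k • x := by
  have hφ : ∀ x, φ x = φ 1 * x := fun x => by
    simpa only [TensorProduct.Algebra.smul_def, one_smul, MulOpposite.smul_eq_mul_unop,
      MulOpposite.unop_op, one_mul] using φ.map_smul (1 ⊗ₜ MulOpposite.op x) 1
  obtain ⟨k, hk⟩ := hC (φ 1) fun k => by
    have := φ.map_smul (k ⊗ₜ 1) 1
    rw [TensorProduct.Algebra.smul_def, one_smul, TensorProduct.Algebra.smul_def, one_smul,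
      hφ] at this
    rw [Commute, SemiconjBy, this, smul_mul_assoc, one_mul]
  exact ⟨k, fun x => by rw [hφ, ← hk, smul_mul_assoc, one_mul]⟩

theorem mulLeftRightLinearMap_surjective [FiniteDimensional F D] :
    Function.Surjective (mulLeftRightLinearMap F K D) := by
  have : Module.Finite K D := Module.Finite.right F K D
  have := isSimpleModule_tensorProduct_op (F := F) (K := K) (D := D)
  intro f
  let b := Module.Free.chooseBasis K D
  let f' : Module.End (Module.End (K ⊗[F] Dᵐᵒᵖ) D) D :=
    { toFun := f
      map_add' := f.map_add
      map_smul' φ x := by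
        obtain ⟨k, hk⟩ := exists_eq_smul_of_linearMap hC φ
        simp only [Module.End.smul_def, hk, map_smul, RingHom.id_apply] }
  classical
  obtain ⟨r, hr⟩ := jacobson_density f' (Finset.univ.image b)
  exact ⟨r, b.ext fun i => (hr (b i) (Finset.mem_image_of_mem b (Finset.mem_univ i))).symm⟩

theorem finrank_le_finrank_of_forall_commute [FiniteDimensional F D] :
    Module.finrank K D ≤ Module.finrank F K := by
  have : Module.Finite K D := Module.Finite.right F K D
  have : Module.Finite F K := Module.Finite.left F K D
  have h := LinearMap.finrank_le_finrank_of_surjective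
    (mulLeftRightLinearMap_surjective (F := F) hC)
  rw [Module.finrank_tensorProduct, ← (MulOpposite.opLinearEquiv F).finrank_eq,
    Module.finrank_linearMap] at h
  exact Nat.le_of_mul_le_mul_right h Module.finrank_pos

end SelfCentralizing

end Subfield

namespace Subalgebra

theorem mem_of_forall_commute_of_maximal {R A : Type*} [CommSemiring R] [Semiring A]
    [Algebra R A] {K : Subalgebra R A} (hK : ∀ x ∈ K, ∀ y ∈ K, x * y = y * x)
    (hmax : ∀ K' : Subalgebra R A, (∀ x ∈ K', ∀ y ∈ K', x * y = y * x) → K ≤ K' → K' = K)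
    {y : A} (hy : ∀ k ∈ K, Commute k y) : y ∈ K := by
  have hcomm : ∀ a ∈ insert y (K : Set A), ∀ b ∈ insert y (K : Set A), a * b = b * a := by
    rintro a (rfl | ha) b (rfl | hb)
    exacts [rfl, (hy b hb).eq.symm, (hy a ha).eq, hK a ha b hb]
  have hK' := hmax (Algebra.adjoin R (insert y K)) (fun a ha b hb => congrArg Subtype.val
    ((Algebra.isMulCommutative_adjoin R hcomm).is_comm.comm ⟨a, ha⟩ ⟨b, hb⟩))
    (fun k hk => Algebra.subset_adjoin (Set.mem_insert_of_mem y hk))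
  exact hK' ▸ Algebra.subset_adjoin (Set.mem_insert y _)

variable {F D : Type*} [Field F] [DivisionRing D] [Algebra F D] [FiniteDimensional F D]
  {K : Subalgebra F D} (hK : ∀ x ∈ K, ∀ y ∈ K, x * y = y * x)
include hK

theorem isField_of_forall_mul_comm : IsField K where
  exists_pair_ne := ⟨0, 1, zero_ne_one⟩
  mul_comm x y := Subtype.ext (hK x x.2 y y.2)
  mul_inv_cancel {x} hx := ⟨⟨(x : D)⁻¹, (IsIntegral.of_finite F (x : D)).inv_mem x.2⟩,
    Subtype.ext (mul_inv_cancel₀ fun h => hx (Subtype.ext h))⟩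

theorem finrank_sq_le_finrank [Algebra.IsCentral F D] :
    Module.finrank F K ^ 2 ≤ Module.finrank F D := by
  let := (isField_of_forall_mul_comm hK).toField
  rw [← Module.finrank_mul_finrank F K D, sq]
  exact Nat.mul_le_mul_left _ finrank_le_finrank_of_isCentral

theorem finrank_le_finrank_sq_of_maximal
    (hmax : ∀ K' : Subalgebra F D, (∀ x ∈ K', ∀ y ∈ K', x * y = y * x) → K ≤ K' → K' = K) :
    Module.finrank F D ≤ Module.finrank F K ^ 2 := by
  let := (isField_of_forall_mul_comm hK).toField
  rw [← Module.finrank_mul_finrank F K D, sq]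
  have hsmul (k : K) : k • (1 : D) = k := by rw [Subalgebra.smul_def, smul_eq_mul, mul_one]
  refine Nat.mul_le_mul_left _ (finrank_le_finrank_of_forall_commute fun y hy => ?_)
  have hyK : y ∈ K := mem_of_forall_commute_of_maximal hK hmax fun k hk => by
    simpa only [hsmul] using hy ⟨k, hk⟩
  exact ⟨⟨y, hyK⟩, hsmul _⟩

end Subalgebra

theorem stmt_12 (F : Type*) [Field F] (D : Type*) [DivisionRing D] [Algebra F D]
    [FiniteDimensional F D]
    (hcentral : Set.center D = Set.range (algebraMap F D))
    (n : ℕ) (hn : Module.finrank F D = n ^ 2)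
    (K : Subalgebra F D) (hK : ∀ x ∈ K, ∀ y ∈ K, x * y = y * x) :
    Module.finrank F K ≤ n ∧
      (Module.finrank F K = n ↔
        ∀ K' : Subalgebra F D, (∀ x ∈ K', ∀ y ∈ K', x * y = y * x) → K ≤ K' → K' = K) := by
  have : Algebra.IsCentral F D := ⟨fun x hx => Algebra.mem_bot.mpr (hcentral ▸ hx)⟩
  have hle : ∀ K' : Subalgebra F D, (∀ x ∈ K', ∀ y ∈ K', x * y = y * x) →
      Module.finrank F K' ≤ n := fun K' hK' =>
    (Nat.pow_le_pow_iff_left two_ne_zero).mp (hn ▸ Subalgebra.finrank_sq_le_finrank hK')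
  refine ⟨hle K hK, fun heq K' hK' hKK' => ?_, fun hmax => le_antisymm (hle K hK) ?_⟩
  · refine (Subalgebra.toSubmodule_injective ?_).symm
    exact Submodule.eq_of_le_of_finrank_le hKK' (heq ▸ hle K' hK')
  · exact (Nat.pow_le_pow_iff_left two_ne_zero).mp
      (hn ▸ Subalgebra.finrank_le_finrank_sq_of_maximal hK hmax)
end

section
/- Let D be an algebraic division ring of characteristic zero with infinite center F, let n ≥ 1, and let f ∈ F⟨X⟩ be neither a polynomial identity nor a central polynomial of M_n(D). Then M_n(D) = Z(M_n(D)) + span f(M_n(D)). -/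
/-!
The span `V` of the values of `f` is a Lie ideal of `Mₙ(D)`: `f(a + t ⁅u, a⁆)` is a polynomial in
`t` whose linear coefficient is `⁅u, f(a)⁆`, and over an infinite field the coefficients of a
polynomial with values in `V` lie in `V`. By Herstein's theorem, a noncentral Lie ideal of a simple
ring of characteristic not two contains every commutator. It remains that every matrix is central
modulo commutators. Modulo commutators `X` is congruent to `E₀₀ (tr X)`, which reduces this to
`D = F + [D, D]`. By Wedderburn's factorization theorem the minimal polynomial of `d` is
`(X - c₁) ⋯ (X - cₘ)` with every `cᵢ` conjugate to `d`; then `m d - ∑ cᵢ` is a sum of commutators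
while `∑ cᵢ = -(next coefficient)` is central, and `m` is invertible in characteristic zero.
-/

open Polynomial

namespace Polynomial

theorem exists_eq_mul_X_sub_C_add_C_eval {R : Type*} [Ring R] (p : R[X]) (c : R) :
    ∃ q, p = q * (X - C c) + C (p.eval c) := by
  refine ⟨∑ k ∈ Finset.range (p.natDegree + 1),
    C (p.coeff k) * ∑ i ∈ Finset.range k, X ^ i * C c ^ (k - 1 - i), ?_⟩
  conv_lhs => rw [p.as_sum_range_C_mul_X_pow]
  rw [eval_eq_sum_range, map_sum, Finset.sum_mul, ← Finset.sum_add_distrib]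
  refine Finset.sum_congr rfl fun k _ => ?_
  rw [mul_assoc, (commute_X (C c)).geom_sum₂_mul, C_mul, C_pow, mul_sub, sub_add_cancel]

theorem eval_mul_eq_sum {R : Type*} [Ring R] (p q : R[X]) (c : R) :
    (p * q).eval c = ∑ k ∈ Finset.range (p.natDegree + 1), p.coeff k * q.eval c * c ^ k := by
  conv_lhs => rw [p.as_sum_range_C_mul_X_pow, Finset.sum_mul, eval_finsetSum]
  refine Finset.sum_congr rfl fun k _ => ?_
  rw [mul_assoc, (commute_X_pow q k).eq, ← mul_assoc, eval_mul_X_pow, eval_C_mul]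

theorem eval_mul_of_eval_ne_zero {D : Type*} [DivisionRing D] (p q : D[X]) {c : D}
    (hq : q.eval c ≠ 0) :
    (p * q).eval c = p.eval (q.eval c * c * (q.eval c)⁻¹) * q.eval c := by
  rw [eval_mul_eq_sum, eval_eq_sum_range (p := p), Finset.sum_mul]
  refine Finset.sum_congr rfl fun k _ => ?_
  rw [← Units.val_mk0 hq, ← Units.val_inv_eq_inv_val, Units.conj_pow]
  simp only [mul_assoc, Units.inv_mul, mul_one]

theorem Monic.list_prod {R : Type*} [Semiring R] {L : List R[X]} (hL : ∀ p ∈ L, p.Monic) :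
    L.prod.Monic :=
  List.prod_induction _ (fun _ _ hp hq => hp.mul hq) monic_one hL

theorem nextCoeff_list_prod_X_sub_C {R : Type*} [Ring R] (L : List R) :
    (L.map fun c => X - C c).prod.nextCoeff = -L.sum := by
  induction L with
  | nil => simp [nextCoeff]
  | cons c L ih =>
    rw [List.map_cons, List.prod_cons, (monic_X_sub_C c).nextCoeff_mul
      (Monic.list_prod (by simp [monic_X_sub_C])), nextCoeff_X_sub_C, ih, List.sum_cons, neg_add]

theorem eval_smul_smul {S G : Type*} [Semiring S] [Monoid G] [MulSemiringAction G S] (g : G)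
    (p : S[X]) (x : S) : (g • p).eval (g • x) = g • p.eval x := by
  rw [smul_eq_map, eval_map]
  exact eval₂_at_apply (MulSemiringAction.toRingHom G S g) x

end Polynomial

section Conjugation

variable {D : Type*} [DivisionRing D]

theorem Subring.mem_center_iff_forall_conjAct_smul {a : D} :
    a ∈ Subring.center D ↔ ∀ g : ConjAct Dˣ, g • a = a := by
  rw [Subring.mem_center_iff]
  refine ⟨fun h g => ?_, fun h x => ?_⟩
  · rw [ConjAct.units_smul_def, h, mul_assoc, Units.mul_inv, mul_one]
  · rcases eq_or_ne x 0 with rfl | hx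
    · simp
    · have := h (ConjAct.toConjAct (Units.mk0 x hx))
      rw [ConjAct.units_smul_def, ConjAct.ofConjAct_toConjAct, Units.val_inv_eq_inv_val,
        Units.val_mk0, mul_inv_eq_iff_eq_mul₀ hx] at this
      exact this

theorem Polynomial.conjAct_smul_map_algebraMap (g : ConjAct Dˣ) (p : (Subring.center D)[X]) :
    g • p.map (algebraMap (Subring.center D) D) = p.map (algebraMap (Subring.center D) D) := by
  ext n
  rw [coeff_smul, coeff_map]
  exact Subring.mem_center_iff_forall_conjAct_smul.1 (p.coeff n).2 g

theorem minpoly_natDegree_le_of_eval_conjAct_smul_eq_zero {d : D} {h : D[X]} (hmon : h.Monic)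
    (hvan : ∀ g : ConjAct Dˣ, h.eval (g • d) = 0) :
    (minpoly (Subring.center D) d).natDegree ≤ h.natDegree := by
  induction hN : h.natDegree using Nat.strong_induction_on generalizing h with
  | _ N ih =>
  by_cases hfix : ∀ g : ConjAct Dˣ, g • h = h
  · have hlifts : h ∈ lifts (algebraMap (Subring.center D) D) :=
      (lifts_iff_coeff_lifts h).2 fun n => ⟨⟨h.coeff n,
        Subring.mem_center_iff_forall_conjAct_smul.2 fun g => by
          rw [← coeff_smul, hfix]⟩, rfl⟩
    obtain ⟨q, hqh, hqdeg, hqmon⟩ := lifts_and_natDegree_eq_and_monic hlifts hmon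
    have hq : aeval d q = 0 := by
      rw [aeval_def, ← eval_map, hqh]
      simpa using hvan 1
    rw [← hN, ← hqdeg]
    exact natDegree_le_natDegree (minpoly.min _ d hqmon hq)
  -- Otherwise `h - g • h` still vanishes on the orbit of `d`, and has smaller degree.
  obtain ⟨g, hg⟩ := not_forall.1 hfix
  have hgh : (g • h).Monic ∧ (g • h).natDegree = h.natDegree := by
    rw [smul_eq_map]
    exact ⟨hmon.map _, natDegree_map_eq_of_injective (RingHom.injective _) h⟩
  set r := h - g • h
  have hr : r ≠ 0 := sub_ne_zero.2 (Ne.symm hg)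
  have hrdeg : r.natDegree < N := by
    rw [← hN]
    exact natDegree_lt_natDegree hr (degree_sub_lt_left (by rw [degree_eq_natDegree hmon.ne_zero,
      degree_eq_natDegree hgh.1.ne_zero, hgh.2]) hmon.ne_zero (by rw [hmon.leadingCoeff,
      hgh.1.leadingCoeff]))
  have hrvan : ∀ g' : ConjAct Dˣ, r.eval (g' • d) = 0 := fun g' => by
    rw [eval_sub, hvan, ← mul_inv_cancel_left g g', mul_smul, eval_smul_smul, hvan, smul_zero,
      sub_zero]
  have hlc : r.leadingCoeff⁻¹ * r.leadingCoeff = 1 :=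
    inv_mul_cancel₀ (leadingCoeff_ne_zero.2 hr)
  calc (minpoly (Subring.center D) d).natDegree
      ≤ (C r.leadingCoeff⁻¹ * r).natDegree :=
        ih _ ((natDegree_C_mul_le _ _).trans_lt hrdeg) (monic_C_mul_of_mul_leadingCoeff_eq_one hlc)
          (fun g' => by rw [eval_C_mul, hrvan, mul_zero]) rfl
    _ ≤ N := (natDegree_C_mul_le _ _).trans hrdeg.le

theorem eval_conjAct_smul_minpoly_map (g : ConjAct Dˣ) (d : D) :
    ((minpoly (Subring.center D) d).map (algebraMap (Subring.center D) D)).eval (g • d) = 0 := by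
  rw [← conjAct_smul_map_algebraMap g, eval_smul_smul, eval_map, ← aeval_def, minpoly.aeval,
    smul_zero]

theorem exists_eval_conjAct_smul_eq_zero_of_minpoly_map_eq_mul {d : D} {f r : D[X]}
    (hr : r.Monic) (hdeg : r.natDegree < (minpoly (Subring.center D) d).natDegree)
    (hfr : (minpoly (Subring.center D) d).map (algebraMap (Subring.center D) D) = f * r) :
    ∃ g : ConjAct Dˣ, f.eval (g • d) = 0 := by
  obtain ⟨g, hg⟩ : ∃ g : ConjAct Dˣ, r.eval (g • d) ≠ 0 := by
    by_contra! hvan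
    exact hdeg.not_ge (minpoly_natDegree_le_of_eval_conjAct_smul_eq_zero hr hvan)
  refine ⟨ConjAct.toConjAct (Units.mk0 _ hg) * g, ?_⟩
  have := eval_conjAct_smul_minpoly_map g d
  rwa [hfr, eval_mul_of_eval_ne_zero _ _ hg, mul_eq_zero, or_iff_left hg, ← Units.val_mk0 hg,
    ← Units.val_inv_eq_inv_val, ← ConjAct.ofConjAct_toConjAct (Units.mk0 _ hg),
    ← ConjAct.units_smul_def, ← mul_smul] at this

theorem exists_list_conjAct_smul_minpoly_map_eq_prod {d : D}
    (hd : IsIntegral (Subring.center D) d) :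
    ∃ L : List D, (∀ c ∈ L, ∃ g : ConjAct Dˣ, g • d = c) ∧
      (minpoly (Subring.center D) d).map (algebraMap (Subring.center D) D) =
        (L.map fun c => X - C c).prod := by
  set P := (minpoly (Subring.center D) d).map (algebraMap (Subring.center D) D)
  have hPdeg : P.natDegree = (minpoly (Subring.center D) d).natDegree :=
    (minpoly.monic hd).natDegree_map _
  suffices ∀ k (f : D[X]), f.Monic → f.natDegree = k → ∀ L : List D,
      (∀ c ∈ L, ∃ g : ConjAct Dˣ, g • d = c) → P = f * (L.map fun c => X - C c).prod →
      ∃ L' : List D, (∀ c ∈ L', ∃ g : ConjAct Dˣ, g • d = c) ∧ P = (L'.map fun c => X - C c).prod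
    from this _ P ((minpoly.monic hd).map _) rfl [] (by simp) (by simp)
  intro k
  induction k with
  | zero =>
    intro f hf hf0 L hL hP
    exact ⟨L, hL, by rw [hP, eq_one_of_monic_natDegree_zero hf hf0, one_mul]⟩
  | succ k ih =>
    intro f hf hfk L hL hP
    have hr : (L.map fun c => X - C c).prod.Monic := Monic.list_prod (by simp [monic_X_sub_C])
    obtain ⟨g, hg⟩ := exists_eval_conjAct_smul_eq_zero_of_minpoly_map_eq_mul hr
      (by rw [← hPdeg, hP, hf.natDegree_mul hr, hfk]; omega) hP
    obtain ⟨q, hq⟩ := exists_eq_mul_X_sub_C_add_C_eval f (g • d)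
    rw [hg, map_zero, add_zero] at hq
    have hqmon : q.Monic := (monic_X_sub_C _).of_mul_monic_right (hq ▸ hf)
    refine ih q hqmon ?_ (g • d :: L) (List.forall_mem_cons.2 ⟨⟨g, rfl⟩, hL⟩) ?_
    · rw [hq, hqmon.natDegree_mul (monic_X_sub_C _), natDegree_X_sub_C] at hfk
      omega
    · rw [List.map_cons, List.prod_cons, hP, hq, mul_assoc]

end Conjugation

section CommutatorSpan

variable {F A : Type*} [CommRing F] [Ring A] [Algebra F A]

variable (F A) in
def commutatorSpan : Submodule F A :=
  Submodule.span F {x | ∃ a b : A, ⁅a, b⁆ = x}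

theorem lie_mem_commutatorSpan (a b : A) : ⁅a, b⁆ ∈ commutatorSpan F A :=
  Submodule.subset_span ⟨a, b, rfl⟩

theorem sub_conjAct_smul_mem_commutatorSpan (g : ConjAct Aˣ) (a : A) :
    a - g • a ∈ commutatorSpan F A := by
  convert lie_mem_commutatorSpan (F := F) (↑(ConjAct.ofConjAct g)⁻¹ : A)
    (↑(ConjAct.ofConjAct g) * a) using 1
  rw [Ring.lie_def, ConjAct.units_smul_def, Units.inv_mul_cancel_left, mul_assoc]

theorem length_nsmul_sub_sum_mem_commutatorSpan {a : A} {L : List A}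
    (hL : ∀ c ∈ L, ∃ g : ConjAct Aˣ, g • a = c) : L.length • a - L.sum ∈ commutatorSpan F A := by
  induction L with
  | nil => simp
  | cons c L ih =>
    obtain ⟨g, rfl⟩ := hL _ List.mem_cons_self
    convert add_mem (sub_conjAct_smul_mem_commutatorSpan (F := F) g a)
      (ih fun c hc => hL c (List.mem_cons_of_mem _ hc)) using 1
    rw [List.length_cons, List.sum_cons, succ_nsmul']
    abel

end CommutatorSpan

theorem exists_sub_algebraMap_mem_commutatorSpan {D : Type*} [DivisionRing D] [CharZero D] {d : D}
    (hd : IsIntegral (Subring.center D) d) :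
    ∃ μ : Subring.center D, d - algebraMap _ D μ ∈ commutatorSpan (Subring.center D) D := by
  obtain ⟨L, hL, hprod⟩ := exists_list_conjAct_smul_minpoly_map_eq_prod hd
  have hsum : L.sum = algebraMap _ D (-(minpoly (Subring.center D) d).nextCoeff) := by
    rw [map_neg, ← nextCoeff_map Subtype.val_injective, hprod, nextCoeff_list_prod_X_sub_C,
      neg_neg]
  have hlen : (L.length : Subring.center D) ≠ 0 := by
    refine Nat.cast_ne_zero.2 fun h => (minpoly.natDegree_pos hd).ne' ?_
    rw [List.length_eq_zero_iff.1 h, List.map_nil, List.prod_nil] at hprod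
    rw [← (minpoly.monic hd).natDegree_map (algebraMap _ D), hprod, natDegree_one]
  refine ⟨(L.length : Subring.center D)⁻¹ * -(minpoly (Subring.center D) d).nextCoeff, ?_⟩
  convert Submodule.smul_mem _ (L.length : Subring.center D)⁻¹
    (length_nsmul_sub_sum_mem_commutatorSpan hL) using 1
  rw [hsum, smul_sub, ← Nat.cast_smul_eq_nsmul (Subring.center D), smul_smul,
    inv_mul_cancel₀ hlen, one_smul, map_mul, Algebra.smul_def]

section LieIdeal

variable {K B ι : Type*} [Field K] [Ring B] [Algebra K B]

theorem Submodule.coeff_mem_of_forall_eval_algebraMap_mem [Infinite K] (W : Submodule K B)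
    (P : B[X]) (h : ∀ t : K, P.eval (algebraMap K B t) ∈ W) (k : ℕ) : P.coeff k ∈ W := by
  by_contra hk
  obtain ⟨φ, hφ⟩ : ∃ φ : Module.Dual K (B ⧸ W), φ (W.mkQ (P.coeff k)) ≠ 0 := by
    by_contra! hall
    exact hk ((Submodule.Quotient.mk_eq_zero W).1
      ((Module.forall_dual_apply_eq_zero_iff K _).1 hall))
  set ℓ := φ ∘ₗ W.mkQ
  set q : K[X] := ∑ i ∈ Finset.range (P.natDegree + 1), monomial i (ℓ (P.coeff i))
  have hq : q = 0 := Polynomial.funext fun t => by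
    have hPt : P.eval (algebraMap K B t) =
        ∑ i ∈ Finset.range (P.natDegree + 1), t ^ i • P.coeff i := by
      rw [eval_eq_sum_range]
      refine Finset.sum_congr rfl fun i _ => ?_
      rw [← map_pow, ← Algebra.commutes, Algebra.smul_def]
    have : ℓ (P.eval (algebraMap K B t)) = 0 := by
      simp [ℓ, (Submodule.Quotient.mk_eq_zero W).2 (h t)]
    rw [hPt, map_sum] at this
    simpa [q, eval_finsetSum, mul_comm] using this
  have hqk : q.coeff k = ℓ (P.coeff k) := by
    simp only [q, finsetSum_coeff, coeff_monomial, Finset.sum_ite_eq', Finset.mem_range]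
    split_ifs with hlt
    · rfl
    · rw [coeff_eq_zero_of_natDegree_lt (by omega), map_zero]
  exact hφ (by rw [← LinearMap.comp_apply, ← hqk, hq, coeff_zero])

theorem coeff_lift_add_lie_mul_X (u : B) (a : ι → B) (g : FreeAlgebra K ι) :
    (FreeAlgebra.lift K (fun i => C (a i) + C ⁅u, a i⁆ * X) g).coeff 0 = FreeAlgebra.lift K a g ∧
      (FreeAlgebra.lift K (fun i => C (a i) + C ⁅u, a i⁆ * X) g).coeff 1 =
        ⁅u, FreeAlgebra.lift K a g⁆ := by
  induction g using FreeAlgebra.induction with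
  | grade0 r =>
    simp [Polynomial.algebraMap_apply, coeff_C, Ring.lie_def, Algebra.commutes]
  | grade1 i => simp [coeff_C]
  | mul x y hx hy =>
    rw [map_mul, map_mul, mul_coeff_zero, hx.1, hy.1, coeff_mul, Finset.Nat.sum_antidiagonal_succ,
      Finset.Nat.antidiagonal_zero, Finset.sum_singleton, hx.1, hx.2, hy.1, hy.2, Ring.lie_def,
      Ring.lie_def, Ring.lie_def]
    exact ⟨rfl, by noncomm_ring⟩
  | add x y hx hy =>
    rw [map_add, map_add, coeff_add, coeff_add, hx.1, hy.1, hx.2, hy.2, Ring.lie_def,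
      Ring.lie_def, Ring.lie_def]
    exact ⟨rfl, by noncomm_ring⟩

theorem eval_lift_add_lie_mul_X (u : B) (a : ι → B) (g : FreeAlgebra K ι) (t : K) :
    (FreeAlgebra.lift K (fun i => C (a i) + C ⁅u, a i⁆ * X) g).eval (algebraMap K B t) =
      FreeAlgebra.lift K (fun i => a i + t • ⁅u, a i⁆) g := by
  let ev := eval₂AlgHom (AlgHom.id K B) (algebraMap K B t)
    fun b => Algebra.commute_algebraMap_right t b
  have : ev.comp (FreeAlgebra.lift K fun i => C (a i) + C ⁅u, a i⁆ * X) =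
      FreeAlgebra.lift K (fun i => a i + t • ⁅u, a i⁆) :=
    FreeAlgebra.hom_ext (funext fun i => by
      simp only [AlgHom.coe_comp, Function.comp_apply, FreeAlgebra.lift_ι_apply]
      change eval (algebraMap K B t) (C (a i) + C ⁅u, a i⁆ * X) = _
      simp [Algebra.smul_def, Algebra.commutes])
  exact DFunLike.congr_fun this g

theorem lie_lift_mem_span_range_lift [Infinite K] (f : FreeAlgebra K ι) (u : B) (a : ι → B) :
    ⁅u, FreeAlgebra.lift K a f⁆ ∈
      Submodule.span K (Set.range fun a : ι → B => FreeAlgebra.lift K a f) := by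
  rw [← (coeff_lift_add_lie_mul_X u a f).2]
  refine Submodule.coeff_mem_of_forall_eval_algebraMap_mem _ _ (fun t => ?_) 1
  rw [eval_lift_add_lie_mul_X]
  exact Submodule.subset_span ⟨_, rfl⟩

theorem lie_mem_span_range_lift [Infinite K] (f : FreeAlgebra K ι) (u : B) {v : B}
    (hv : v ∈ Submodule.span K (Set.range fun a : ι → B => FreeAlgebra.lift K a f)) :
    ⁅u, v⁆ ∈ Submodule.span K (Set.range fun a : ι → B => FreeAlgebra.lift K a f) := by
  induction hv using Submodule.span_induction with
  | mem x hx =>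
    obtain ⟨a, rfl⟩ := hx
    exact lie_lift_mem_span_range_lift f u a
  | zero => simp [Ring.lie_def]
  | add x y _ _ hx hy =>
    convert add_mem hx hy using 1
    simp only [Ring.lie_def]
    noncomm_ring
  | smul t x _ hx =>
    convert Submodule.smul_mem _ t hx using 1
    simp only [Ring.lie_def, smul_sub, mul_smul_comm, smul_mul_assoc]

end LieIdeal

section SimpleRing

variable {R : Type*} [Ring R]

-- Herstein's `T(U)`.
def AddSubgroup.lieColon (U : AddSubgroup R) : Subring R where
  carrier := {x | ∀ a, ⁅x, a⁆ ∈ U}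
  zero_mem' a := by simp [Ring.lie_def]
  one_mem' a := by simp [Ring.lie_def]
  add_mem' {x y} hx hy a := by
    convert U.add_mem (hx a) (hy a) using 1
    simp only [Ring.lie_def]
    noncomm_ring
  neg_mem' {x} hx a := by
    convert U.neg_mem (hx a) using 1
    simp only [Ring.lie_def]
    noncomm_ring
  mul_mem' {x y} hx hy a := by
    convert U.add_mem (hx (y * a)) (hy (a * x)) using 1
    simp only [Ring.lie_def]
    noncomm_ring

theorem AddSubgroup.le_lieColon_of_lie_mem {U : AddSubgroup R} (hU : ∀ x : R, ∀ u ∈ U, ⁅x, u⁆ ∈ U) :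
    U ≤ U.lieColon.toAddSubgroup := fun u hu a => by
  convert U.neg_mem (hU a u hu) using 1
  simp only [Ring.lie_def, neg_sub]

variable [IsSimpleRing R]

theorem IsSimpleRing.mem_of_forall_mul_mul_mem {c : R} (hc : c ≠ 0) {S : AddSubgroup R}
    (hS : ∀ x y, x * c * y ∈ S) (z : R) : z ∈ S := by
  have h1 := one_mem_of_ne_zero_mem (TwoSidedIdeal.span {c}) hc (TwoSidedIdeal.subset_span rfl)
  have hz := (TwoSidedIdeal.span {c}).mul_mem_left z 1 h1
  rw [mul_one, TwoSidedIdeal.mem_span_iff_mem_addSubgroup_closure] at hz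
  refine (AddSubgroup.closure_le S).2 ?_ hz
  rintro _ ⟨_, ⟨x, -, _, rfl, rfl⟩, y, -, rfl⟩
  exact hS x y

theorem IsSimpleRing.eq_zero_of_forall_mul_mul_eq_zero {c : R} (h : ∀ x, c * x * c = 0) :
    c = 0 := by
  by_contra hc
  have := mem_of_forall_mul_mul_mem hc (S := (AddMonoidHom.mulLeft c).ker)
    (fun x y => by simp [AddMonoidHom.mem_ker, ← mul_assoc, h]) 1
  exact hc (by simpa using this)

theorem IsSimpleRing.eq_zero_of_two_mul_eq_zero (h2 : (2 : R) ≠ 0) {z : R} (hz : 2 * z = 0) :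
    z = 0 := by
  obtain ⟨i, hi⟩ := (isField_center R).mul_inv_cancel
    (a := 2) fun h => h2 (congrArg Subtype.val h)
  have hi' : (i : R) * 2 = 1 := by
    rw [← Subring.mem_center_iff.1 i.2]
    exact congrArg Subtype.val hi
  rw [← one_mul z, ← hi', mul_assoc, hz, mul_zero]

theorem IsSimpleRing.lie_eq_zero_of_forall_lie_lie_eq_zero (h2 : (2 : R) ≠ 0) {v : R}
    (h : ∀ x : R, ⁅v, ⁅v, x⁆⁆ = 0) (w : R) : ⁅v, w⁆ = 0 := by
  have hprod (x y : R) : ⁅v, x⁆ * ⁅v, y⁆ = 0 := by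
    refine eq_zero_of_two_mul_eq_zero h2 ?_
    calc (2 : R) * (⁅v, x⁆ * ⁅v, y⁆) = ⁅v, ⁅v, x * y⁆⁆ - ⁅v, ⁅v, x⁆⁆ * y - x * ⁅v, ⁅v, y⁆⁆ := by
          simp only [Ring.lie_def]
          noncomm_ring
      _ = 0 := by simp [h]
  refine eq_zero_of_forall_mul_mul_eq_zero fun z => ?_
  calc ⁅v, w⁆ * z * ⁅v, w⁆ = ⁅v, w⁆ * ⁅v, z * w⁆ - ⁅v, w⁆ * ⁅v, z⁆ * w := by
        simp only [Ring.lie_def]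
        noncomm_ring
    _ = 0 := by simp [hprod]

variable {U : AddSubgroup R} (hU : ∀ x : R, ∀ u ∈ U, ⁅x, u⁆ ∈ U)
include hU

theorem IsSimpleRing.lie_mem_of_lie_ne_zero {s t : R} (hs : s ∈ U) (ht : t ∈ U) (hst : ⁅s, t⁆ ≠ 0)
    (x y : R) : ⁅x, y⁆ ∈ U := by
  have hUT := AddSubgroup.le_lieColon_of_lie_mem hU
  have hleft (y : R) : y * ⁅s, t⁆ ∈ U.lieColon := by
    convert U.lieColon.sub_mem (hUT (hUT hs (y * t))) (U.lieColon.mul_mem (hUT (hUT hs y)) (hUT ht))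
      using 1
    simp only [Ring.lie_def]
    noncomm_ring
  have hmid (x y : R) : x * ⁅s, t⁆ * y ∈ U.lieColon := by
    convert U.lieColon.add_mem (hUT (hleft x y)) (hleft (y * x)) using 1
    simp only [Ring.lie_def]
    noncomm_ring
  exact mem_of_forall_mul_mul_mem (S := U.lieColon.toAddSubgroup) hst hmid x y

theorem IsSimpleRing.lie_mem_of_notMem_center (h2 : (2 : R) ≠ 0) {v : R} (hvU : v ∈ U)
    (hv : v ∉ Set.center R) (x y : R) : ⁅x, y⁆ ∈ U := by
  obtain ⟨s, hs, t, ht, hst⟩ : ∃ s ∈ U, ∃ t ∈ U, ⁅s, t⁆ ≠ 0 := by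
    by_contra! hcomm
    have hUT := AddSubgroup.le_lieColon_of_lie_mem hU
    refine hv (Semigroup.mem_center_iff.2 fun w => ?_)
    have := lie_eq_zero_of_forall_lie_lie_eq_zero h2 (fun x => hcomm v hvU _ (hUT hvU x)) w
    rwa [Ring.lie_def, sub_eq_zero, eq_comm] at this
  exact lie_mem_of_lie_ne_zero hU hs ht hst x y

end SimpleRing

namespace Matrix

variable {F A ι : Type*} [Field F] [Ring A] [Algebra F A] [Fintype ι] [DecidableEq ι]

theorem single_mem_commutatorSpan_of_ne {i j : ι} (hij : i ≠ j) (a : A) :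
    single i j a ∈ commutatorSpan F (Matrix ι ι A) := by
  convert lie_mem_commutatorSpan (F := F) (single i j a) (single j j (1 : A)) using 1
  rw [Ring.lie_def, single_mul_single_same, mul_one,
    single_mul_single_of_ne _ j j i hij.symm, sub_zero]

theorem single_sub_single_mem_commutatorSpan (i j : ι) (a : A) :
    single i i a - single j j a ∈ commutatorSpan F (Matrix ι ι A) := by
  convert lie_mem_commutatorSpan (F := F) (single i j a) (single j i (1 : A)) using 1
  rw [Ring.lie_def, single_mul_single_same, single_mul_single_same, mul_one, one_mul]

theorem map_singleLinearMap_commutatorSpan_le (i : ι) :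
    (commutatorSpan F A).map (singleLinearMap F i i) ≤ commutatorSpan F (Matrix ι ι A) := by
  rw [commutatorSpan, Submodule.map_span_le]
  rintro _ ⟨a, b, rfl⟩
  convert lie_mem_commutatorSpan (F := F) (single i i a) (single i i b) using 1
  rw [Ring.lie_def, Ring.lie_def, map_sub, single_mul_single_same, single_mul_single_same]
  rfl

theorem sub_single_trace_mem_commutatorSpan (i₀ : ι) (M : Matrix ι ι A) :
    M - single i₀ i₀ M.trace ∈ commutatorSpan F (Matrix ι ι A) := by
  induction M using Matrix.induction_on' with
  | h_zero => simp
  | h_add p q hp hq =>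
    convert add_mem hp hq using 1
    rw [trace_add, single_add]
    abel
  | h_std_basis i j a =>
    rcases eq_or_ne i j with rfl | hij
    · rw [trace_single_eq_same]
      exact single_sub_single_mem_commutatorSpan i i₀ a
    · rw [trace_single_eq_of_ne i j a hij, single_zero, sub_zero]
      exact single_mem_commutatorSpan_of_ne hij a

theorem exists_sub_algebraMap_mem_commutatorSpan (hι : (Fintype.card ι : F) ≠ 0)
    (hA : ∀ a : A, ∃ μ : F, a - algebraMap F A μ ∈ commutatorSpan F A) (M : Matrix ι ι A) :
    ∃ μ : F, M - algebraMap F (Matrix ι ι A) μ ∈ commutatorSpan F (Matrix ι ι A) := by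
  obtain ⟨i₀⟩ : Nonempty ι := Fintype.card_pos_iff.1 (Nat.pos_of_ne_zero fun h => hι (by simp [h]))
  obtain ⟨μ, hμ⟩ := hA M.trace
  set c := (Fintype.card ι : F)⁻¹ * μ
  have htrace : (algebraMap F (Matrix ι ι A) c).trace = algebraMap F A μ := by
    rw [Algebra.algebraMap_eq_smul_one, trace_smul, trace_one, ← map_natCast (algebraMap F A),
      Algebra.smul_def, ← map_mul, mul_comm, ← mul_assoc, mul_inv_cancel₀ hι, one_mul]
  refine ⟨c, ?_⟩
  convert sub_mem (add_mem (sub_single_trace_mem_commutatorSpan i₀ M)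
    (map_singleLinearMap_commutatorSpan_le i₀ ⟨_, hμ, rfl⟩))
    (sub_single_trace_mem_commutatorSpan i₀ (algebraMap F _ c)) using 1
  simp only [htrace, map_sub, singleLinearMap_apply]
  abel

end Matrix

theorem stmt_16_general (D : Type*) [DivisionRing D] [CharZero D]
    [Algebra.IsAlgebraic (Subring.center D) D] [Infinite (Subring.center D)]
    (n : ℕ) (hn : 0 < n)
    (f : FreeAlgebra (Subring.center D) ℕ)
    (hC : ∃ a : ℕ → Matrix (Fin n) (Fin n) D,
      FreeAlgebra.lift (Subring.center D) a f ∉ Set.center (Matrix (Fin n) (Fin n) D)) :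
    ∀ X : Matrix (Fin n) (Fin n) D,
      ∃ z ∈ Set.center (Matrix (Fin n) (Fin n) D),
        ∃ c ∈ Submodule.span (Subring.center D)
          (Set.range fun a : ℕ → Matrix (Fin n) (Fin n) D =>
            FreeAlgebra.lift (Subring.center D) a f),
          X = z + c := by
  intro X
  have : NeZero n := ⟨hn.ne'⟩
  have h2 : (2 : Matrix (Fin n) (Fin n) D) ≠ 0 := fun h => by
    simpa [Matrix.ofNat_apply] using congrFun (congrFun h 0) 0
  obtain ⟨a, ha⟩ := hC
  have hV : commutatorSpan (Subring.center D) (Matrix (Fin n) (Fin n) D) ≤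
      Submodule.span (Subring.center D)
        (Set.range fun a : ℕ → Matrix (Fin n) (Fin n) D => FreeAlgebra.lift _ a f) := by
    refine Submodule.span_le.2 ?_
    rintro _ ⟨x, y, rfl⟩
    exact IsSimpleRing.lie_mem_of_notMem_center (U := (Submodule.span _ _).toAddSubgroup)
      (fun x _ hv => lie_mem_span_range_lift f x hv) h2
      (Submodule.subset_span (Set.mem_range_self a)) ha x y
  obtain ⟨μ, hμ⟩ := Matrix.exists_sub_algebraMap_mem_commutatorSpan (by simpa using hn.ne')
    (fun d => exists_sub_algebraMap_mem_commutatorSpan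
      (Algebra.IsAlgebraic.isAlgebraic d).isIntegral) X
  exact ⟨_, Set.algebraMap_mem_center μ, _, hV hμ, (add_sub_cancel _ _).symm⟩

theorem stmt_16 (D : Type*) [DivisionRing D] [CharZero D]
    [Algebra.IsAlgebraic (Subring.center D) D] [Infinite (Subring.center D)]
    (n : ℕ) (hn : 0 < n)
    (f : FreeAlgebra (Subring.center D) ℕ)
    (hPI : ∃ a : ℕ → Matrix (Fin n) (Fin n) D,
      FreeAlgebra.lift (Subring.center D) a f ≠ 0)
    (hC : ∃ a : ℕ → Matrix (Fin n) (Fin n) D,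
      FreeAlgebra.lift (Subring.center D) a f ∉ Set.center (Matrix (Fin n) (Fin n) D)) :
    ∀ X : Matrix (Fin n) (Fin n) D,
      ∃ z ∈ Set.center (Matrix (Fin n) (Fin n) D),
        ∃ c ∈ Submodule.span (Subring.center D)
          (Set.range fun a : ℕ → Matrix (Fin n) (Fin n) D =>
            FreeAlgebra.lift (Subring.center D) a f),
          X = z + c :=
  stmt_16_general D n hn f hC
end

section
/- Let D be a finite-dimensional division F-algebra, and let f(a₁,...,a_m) ∈ D generate a maximal subfield of D (i.e., F(f(a₁,...,a_m)) is a maximal subfield). Then D is generated as an F-algebra by the image f(D), since a conjugate γ f(a₁,...,a_m) γ⁻¹ equals f(γa₁γ⁻¹, ..., γa_mγ⁻¹) and also lies in f(D). -/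
theorem stmt_18 (F : Type*) [Field F] (D : Type*) [DivisionRing D] [Algebra F D]
    [FiniteDimensional F D] (m : ℕ) (f : FreeAlgebra F (Fin m)) (a : Fin m → D)
    (hmax : ∀ K : Subalgebra F D, (∀ x ∈ K, ∀ y ∈ K, x * y = y * x) →
      Algebra.adjoin F {(FreeAlgebra.lift F a f : D)} ≤ K →
        K = Algebra.adjoin F {(FreeAlgebra.lift F a f : D)}) :
    Algebra.adjoin F (Set.range fun d : Fin m → D => (FreeAlgebra.lift F d f : D)) = ⊤ := by
  set c : D := FreeAlgebra.lift F a f with hc_def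
  set S : Set D := Set.range fun d : Fin m → D => (FreeAlgebra.lift F d f : D) with hS_def
  set A : Subalgebra F D := Algebra.adjoin F S with hA_def
  have hcS : c ∈ S := ⟨a, rfl⟩
  have hcA : c ∈ A := Algebra.subset_adjoin hcS
  -- A is stable under conjugation
  have hconj : ∀ γ : D, γ ≠ 0 → ∀ x ∈ A, γ * x * γ⁻¹ ∈ A := by
    intro γ hγ x hx
    let g : D →ₐ[F] D :=
      { toFun := fun x => γ * x * γ⁻¹
        map_one' := by show γ * 1 * γ⁻¹ = 1; rw [mul_one, mul_inv_cancel₀ hγ]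
        map_mul' := fun x y => by
          show γ * (x * y) * γ⁻¹ = γ * x * γ⁻¹ * (γ * y * γ⁻¹)
          simp [mul_assoc, inv_mul_cancel_left₀ hγ]
        map_zero' := by show γ * 0 * γ⁻¹ = 0; rw [mul_zero, zero_mul]
        map_add' := fun x y => by
          show γ * (x + y) * γ⁻¹ = γ * x * γ⁻¹ + γ * y * γ⁻¹
          rw [mul_add, add_mul]
        commutes' := fun r => by
          show γ * algebraMap F D r * γ⁻¹ = algebraMap F D r
          rw [← Algebra.commutes r γ, mul_assoc, mul_inv_cancel₀ hγ, mul_one] }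
    have himg : g '' S ⊆ S := by
      rintro _ ⟨_, ⟨d, rfl⟩, rfl⟩
      refine ⟨fun i => g (d i), ?_⟩
      have : (g.comp (FreeAlgebra.lift F d)) = FreeAlgebra.lift F (fun i => g (d i)) := by
        apply FreeAlgebra.hom_ext
        funext i
        simp
      exact (congrArg (fun h : FreeAlgebra F (Fin m) →ₐ[F] D => h f) this).symm
    have hmap : A.map g ≤ A := by
      rw [hA_def, AlgHom.map_adjoin]
      exact Algebra.adjoin_mono himg
    exact hmap ⟨x, hx, rfl⟩
  have : Algebra.IsIntegral F D := Algebra.IsIntegral.of_finite F D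
  have hinv : ∀ x ∈ A, x⁻¹ ∈ A := fun x hx =>
    (Algebra.IsIntegral.isIntegral (R := F) x).inv_mem hx
  -- suppose A ≠ ⊤
  by_contra hne
  obtain ⟨t, ht⟩ : ∃ t, t ∉ A := by
    by_contra h
    push_neg at h
    exact hne (Algebra.eq_top_iff.mpr h)
  -- Cartan–Brauer–Hua step: elements outside A commute with elements of A
  have key : ∀ x ∈ A, ∀ b, b ∉ A → b * x = x * b := by
    intro x hx b hb
    have hb0 : b ≠ 0 := fun h => hb (h ▸ A.zero_mem)
    have hb1 : (1 : D) + b ≠ 0 := by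
      intro h
      have : b = -1 := (neg_eq_of_add_eq_zero_right h).symm
      exact hb (this ▸ A.neg_mem A.one_mem)
    have hu : b * x * b⁻¹ ∈ A := hconj b hb0 x hx
    have hv : (1 + b) * x * (1 + b)⁻¹ ∈ A := hconj _ hb1 x hx
    set u : D := b * x * b⁻¹ with hu_def
    set v : D := (1 + b) * x * (1 + b)⁻¹ with hv_def
    have hub : u * b = b * x := by
      rw [hu_def, mul_assoc, inv_mul_cancel₀ hb0, mul_one]
    have hvb : v * (1 + b) = (1 + b) * x := by
      rw [hv_def, mul_assoc, inv_mul_cancel₀ hb1, mul_one]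
    -- v + v*b = x + b*x = x + u*b
    have hmain : v + v * b = x + u * b := by
      rw [hub]
      calc v + v * b = v * (1 + b) := by rw [mul_add, mul_one]
        _ = (1 + b) * x := hvb
        _ = x + b * x := by rw [add_mul, one_mul]
    by_cases huv : u = v
    · -- then v = x, so b*x*b⁻¹ = x
      have hvx : v = x := by
        have : v + u * b = x + u * b := by rw [← hmain, huv]
        exact add_right_cancel this
      have : b * x * b⁻¹ = x := by rw [← hu_def, huv, hvx]
      calc b * x = b * x * b⁻¹ * b := by rw [mul_assoc, inv_mul_cancel₀ hb0, mul_one]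
        _ = x * b := by rw [this]
    · -- then b ∈ A, contradiction
      exfalso
      have hd : (u - v) * b = v - x := by
        rw [sub_mul, sub_eq_sub_iff_add_eq_add, add_comm (u * b) x]
        exact hmain.symm
      have huv0 : u - v ≠ 0 := sub_ne_zero.mpr huv
      have hbA : b ∈ A := by
        have : b = (u - v)⁻¹ * (v - x) := by
          rw [← hd, ← mul_assoc, inv_mul_cancel₀ huv0, one_mul]
        rw [this]
        exact A.mul_mem (hinv _ (A.sub_mem hu hv)) (A.sub_mem hv hx)
      exact hb hbA
  -- hence every element of A is central
  have central : ∀ x ∈ A, ∀ y : D, y * x = x * y := by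
    intro x hx y
    by_cases hy : y ∈ A
    · have hyt : y + t ∉ A := by
        intro h
        exact ht (by simpa using A.sub_mem h hy)
      have h1 := key x hx (y + t) hyt
      have h2 := key x hx t ht
      have h3 : y * x + t * x = x * y + x * t := by
        rw [← add_mul, ← mul_add]; exact h1
      rw [h2] at h3
      exact add_right_cancel h3
    · exact key x hx y hy
  have hcent : ∀ y : D, y * c = c * y := central c hcA
  -- every element lies in adjoin F {c} ≤ A
  have hall : ∀ x : D, x ∈ A := by
    intro x
    have hcomm : ∀ p ∈ ({x, c} : Set D), ∀ q ∈ ({x, c} : Set D), p * q = q * p := by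
      rintro p hp q hq
      rcases hp with rfl | hp <;> rcases hq with rfl | hq
      · rfl
      · rw [Set.mem_singleton_iff] at hq; rw [hq]; exact hcent p
      · rw [Set.mem_singleton_iff] at hp; rw [hp]; exact (hcent q).symm
      · rw [Set.mem_singleton_iff] at hp hq; rw [hp, hq]
    set K : Subalgebra F D := Algebra.adjoin F ({x, c} : Set D) with hK_def
    have hKcomm : ∀ u ∈ K, ∀ v ∈ K, u * v = v * u := by
      letI : CommRing (Algebra.adjoin F ({x, c} : Set D)) :=
        Algebra.adjoinCommRingOfComm F hcomm
      intro u hu v hv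
      exact congrArg Subtype.val (mul_comm (⟨u, hu⟩ : Algebra.adjoin F ({x, c} : Set D)) ⟨v, hv⟩)
    have hle : Algebra.adjoin F {c} ≤ K := Algebra.adjoin_mono (by simp)
    have hKeq := hmax K hKcomm hle
    have hxK : x ∈ K := Algebra.subset_adjoin (by simp)
    rw [hKeq] at hxK
    exact Algebra.adjoin_le (Set.singleton_subset_iff.mpr hcA) hxK
  exact hne (Algebra.eq_top_iff.mpr hall)
end
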